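/- Given a crossed module (G, H, t, α), the composition operation on the semidirect product H ⋊ G given by (h', t(h)g) ∘ (h, g) = (h'h, g) is compatible with the group multiplication: for composable pairs, the composite of products equals the product of composites (the interchange law). Precisely, if β ∘ α and β' ∘ α' are defined (i.e., s(β) = t(α) and s(β') = t(α')), then (β·β') ∘ (α·α') = (β ∘ α)·(β' ∘ α'). -/
import Mathlib


/-- The interchange law in the 2-group associated to a crossed module: composition
`(h', t(h)g) ∘ (h, g) = (h'h, g)` on the semidirect product `H ⋊ G` is compatible
with multiplication: if `β ∘ a` and `β' ∘ a'` are defined (the source of `β` is the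
target of `a`, etc.), then `(β·β') ∘ (a·a') = (β ∘ a)·(β' ∘ a')`. -/
theorem crossedModule_interchange {G H : Type*} [Group G] [Group H]
    (t : H →* G) (α : G →* MulAut H)
    (equivariance : ∀ (g : G) (h : H), t (α g h) = g * t h * g⁻¹)
    (peiffer : ∀ h h' : H, α (t h) h' = h * h' * h⁻¹) :
    let mul : H × G → H × G → H × G := fun p q => (p.1 * α p.2 q.1, p.2 * q.2)
    let comp : H × G → H × G → H × G := fun β a => (β.1 * a.1, a.2)
    ∀ a β a' β' : H × G,
      β.2 = t a.1 * a.2 → β'.2 = t a'.1 * a'.2 →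
      comp (mul β β') (mul a a') = mul (comp β a) (comp β' a') := by
  intro mul comp a β a' β' hβ hβ'
  simp only [mul, comp, Prod.mk.injEq, hβ, map_mul, MulAut.mul_apply, peiffer, and_true]
  group
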